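/- arXiv:1406.2425 — 8 statements merged into one kernel-verified Lean document; each statement's English description precedes it below -/
import Mathlib

section
/- For every positive integers n, k, every g ∈ GL_n(ℂ) and every n×(kn) matrix X over ℂ, one has wrdet_k(gX) = (det g)^k · wrdet_k(X). -/
/-!
Write `N = kn`. Since `k ^ c(σ)` counts the colourings `φ : [N] → [k]` constant on the cycles
of `σ`, and `sign σ = (-1) ^ ν(σ)`, one gets
`adet_{-1/k}(A) = k^{-N} ∑_φ det A_φ`, where `A_φ` keeps only the entries of `A` between rows
and columns of the same colour. Hence `adet_{-1/k}`, which like every `adet_α` is multilinear in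
the rows, vanishes as soon as `k + 1` rows coincide: two of them get the same colour. Multiplying `X` on the left
by a diagonal matrix scales the `k` copies of each row of `X`, which multiplies `wrdet_k` by
`(det)^k`. Multiplying by a transvection adds a multiple of row `j` to the `k` copies of row `i`;
each single addition adds a matrix with `k + 1` equal rows, so it changes nothing. Every square
matrix is a product of transvections and a diagonal matrix.
-/

/-- The number of cycles of a permutation, counting fixed points as cycles. -/
def cycleCount {N : ℕ} (σ : Equiv.Perm (Fin N)) : ℕ :=
  σ.cycleType.card + (Finset.univ.filter fun x => σ x = x).card

/-- ν(σ) = N − c(σ), where c(σ) is the number of cycles of σ (fixed points counted). -/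
def nuPerm {N : ℕ} (σ : Equiv.Perm (Fin N)) : ℕ := N - cycleCount σ

/-- The alpha-determinant of a square matrix over a commutative ℚ-algebra. -/
noncomputable def adet {R : Type*} [CommRing R] [Algebra ℚ R] (α : ℚ) {N : ℕ}
    (X : Matrix (Fin N) (Fin N) R) : R :=
  ∑ σ : Equiv.Perm (Fin N),
    algebraMap ℚ R (α ^ nuPerm σ) * ∏ i, X (σ i) i

/-- The k-wreath determinant of an n × (kn) matrix: wrdet_k(X) = adet_{-1/k}(X ⊗ 1_{k,1}),
where `X ⊗ 1_{k,1}` is the kn × kn matrix in which each row of `X` is repeated `k`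
consecutive times (row `i` of the blowup is row `⌊i/k⌋` of `X`). -/
noncomputable def wrdet {R : Type*} [CommRing R] [Algebra ℚ R] (k : ℕ) {n : ℕ}
    (X : Matrix (Fin n) (Fin (n * k)) R) : R :=
  adet (-(1 : ℚ) / k) (Matrix.of fun i j : Fin (n * k) => X i.divNat j)

open Finset Matrix Equiv Equiv.Perm

namespace Equiv.Perm

lemma apply_eq_of_sameCycle {α β : Type*} [Finite α] {σ : Perm α} {φ : α → β}
    (hφ : ∀ x, φ (σ x) = φ x) {x y : α} (h : σ.SameCycle x y) : φ y = φ x := by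
  obtain ⟨i, -, rfl⟩ := h.exists_pow_eq'
  rw [coe_pow]
  exact (Function.Semiconj.iterate_right (f := φ) (ga := σ) (gb := id) hφ i x).trans
    (congrFun (Function.iterate_id i) _)

variable {α : Type*} [Fintype α] [DecidableEq α]

lemma support_nonempty_of_mem_cycleFactorsFinset {σ c : Perm α}
    (hc : c ∈ σ.cycleFactorsFinset) : c.support.Nonempty :=
  (mem_cycleFactorsFinset_iff.mp hc).1.nonempty_support

noncomputable def invariantFunEquiv (σ : Perm α) (β : Type*) :
    {φ : α → β // ∀ x, φ (σ x) = φ x} ≃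
      (σ.cycleFactorsFinset → β) × (Function.fixedPoints σ → β) where
  toFun φ := (fun c => φ.1 (support_nonempty_of_mem_cycleFactorsFinset c.2).choose,
    fun x => φ.1 x)
  invFun p := ⟨fun x => if hx : σ x = x then p.2 ⟨x, hx⟩
      else p.1 ⟨σ.cycleOf x, cycleOf_mem_cycleFactorsFinset_iff.mpr (mem_support.mpr hx)⟩, by
    intro x
    by_cases hx : σ x = x
    · simp only [hx]
    · have hσx : σ (σ x) ≠ σ x := fun h => hx (σ.injective h)
      simp only [dif_neg hσx, dif_neg hx, cycleOf_self_apply]⟩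
  left_inv φ := by
    ext x
    dsimp only
    split_ifs with hx
    · rfl
    · have hc := cycleOf_mem_cycleFactorsFinset_iff.mpr (mem_support.mpr hx)
      exact apply_eq_of_sameCycle φ.2 (mem_support_cycleOf_iff.mp
        (support_nonempty_of_mem_cycleFactorsFinset hc).choose_spec).1
  right_inv p := by
    refine Prod.ext (funext fun c => ?_) (funext fun x => dif_pos x.2)
    have hm := (support_nonempty_of_mem_cycleFactorsFinset c.2).choose_spec
    set m := (support_nonempty_of_mem_cycleFactorsFinset c.2).choose
    have hσm : σ m ≠ m := by
      rw [← (mem_cycleFactorsFinset_iff.mp c.2).2 _ hm]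
      exact mem_support.mp hm
    change dite _ _ _ = _
    rw [dif_neg hσm]
    exact congrArg p.1 (Subtype.ext (cycle_is_cycleOf hm c.2).symm)

lemma card_cycleType_le_sum (σ : Perm α) : Multiset.card σ.cycleType ≤ σ.cycleType.sum := by
  simpa using Multiset.card_nsmul_le_sum (s := σ.cycleType) (a := 1)
    fun _ hx => (two_le_of_mem_cycleType hx).trans' one_le_two

end Equiv.Perm

variable {N k : ℕ}

lemma cycleCount_eq (σ : Perm (Fin N)) :
    cycleCount σ = Multiset.card σ.cycleType + (N - σ.cycleType.sum) := by
  have h := card_fixedPoints σ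
  rw [Fintype.card_fin] at h
  rw [cycleCount, ← h, Fintype.card_ofFinset]
  rfl

lemma cycleCount_le (σ : Perm (Fin N)) : cycleCount σ ≤ N := by
  have := card_cycleType_le_sum σ
  have := Fintype.card_fin N ▸ sum_cycleType_le σ
  rw [cycleCount_eq]
  omega

lemma sign_eq_neg_one_pow_nuPerm (σ : Perm (Fin N)) : sign σ = (-1) ^ nuPerm σ := by
  have := card_cycleType_le_sum σ
  have := Fintype.card_fin N ▸ sum_cycleType_le σ
  have hν : σ.cycleType.sum + Multiset.card σ.cycleType
      = nuPerm σ + 2 * Multiset.card σ.cycleType := by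
    rw [nuPerm, cycleCount_eq]
    omega
  rw [sign_of_cycleType, hν, pow_add, pow_mul, Int.units_sq, one_pow, mul_one]

lemma card_invariantFun (σ : Perm (Fin N)) :
    Fintype.card {φ : Fin N → Fin k // ∀ x, φ (σ x) = φ x} = k ^ cycleCount σ := by
  rw [Fintype.card_congr (invariantFunEquiv σ _), Fintype.card_prod, Fintype.card_fun,
    Fintype.card_fun, Fintype.card_fin, Fintype.card_coe, ← pow_add, cycleCount,
    Fintype.card_ofFinset, cycleType_def, Multiset.card_map]
  rfl

lemma prod_updateRow_perm {ι M : Type*} [Fintype ι] [DecidableEq ι] [CommMonoid M] (σ : Perm ι)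
    (A : Matrix ι ι M) (r : ι) (w : ι → M) :
    ∏ i, A.updateRow r w (σ i) i = w (σ⁻¹ r) * ∏ i ∈ {σ⁻¹ r}ᶜ, A (σ i) i := by
  rw [Fintype.prod_eq_mul_prod_compl (σ⁻¹ r), ← Perm.mul_apply, mul_inv_cancel, Perm.one_apply,
    updateRow_self]
  refine congrArg _ (prod_congr rfl fun i hi => ?_)
  rw [updateRow_ne fun h => mem_compl.mp hi (mem_singleton.mpr (eq_inv_iff_eq.mpr h))]

section Adet

variable {R : Type*} [CommRing R] [Algebra ℚ R]

lemma neg_one_div_pow_nuPerm (hk : k ≠ 0) (σ : Perm (Fin N)) :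
    (-(1 : ℚ) / k) ^ nuPerm σ = (k : ℚ)⁻¹ ^ N * ((sign σ : ℤ) * k ^ cycleCount σ) := by
  have hk' : (k : ℚ) ≠ 0 := Nat.cast_ne_zero.mpr hk
  rw [div_eq_mul_inv, mul_pow, sign_eq_neg_one_pow_nuPerm, nuPerm,
    pow_sub₀ _ (inv_ne_zero hk') (cycleCount_le σ), inv_pow _ (cycleCount σ), inv_inv]
  push_cast
  ring

def colorBlocks {ι κ α : Type*} [DecidableEq κ] [Zero α] (φ : ι → κ) (A : Matrix ι ι α) :
    Matrix ι ι α :=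
  Matrix.of fun i j => if φ i = φ j then A i j else 0

lemma adet_neg_one_div_eq_smul_sum_det (hk : k ≠ 0) (A : Matrix (Fin N) (Fin N) R) :
    adet (-(1 : ℚ) / k) A = (k : ℚ)⁻¹ ^ N • ∑ φ : Fin N → Fin k, (colorBlocks φ A).det := by
  have hterm (σ : Perm (Fin N)) : ∑ φ : Fin N → Fin k, sign σ • ∏ i, colorBlocks φ A (σ i) i
      = ((sign σ : ℤ) * k ^ cycleCount σ : ℚ) • ∏ i, A (σ i) i := by
    simp only [colorBlocks, of_apply, Fintype.prod_ite_zero, smul_ite, smul_zero]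
    rw [Finset.sum_ite, Finset.sum_const_zero, add_zero, Finset.sum_const, ← Fintype.card_subtype,
      card_invariantFun, Units.smul_def, smul_comm, mul_smul, ← Nat.cast_smul_eq_nsmul ℚ,
      ← Int.cast_smul_eq_zsmul ℚ]
    norm_cast
  simp only [det_apply, Finset.sum_comm (γ := Fin N → Fin k), hterm, Finset.smul_sum, adet,
    neg_one_div_pow_nuPerm hk, ← Algebra.smul_def, mul_smul]

lemma adet_updateRow_add_smul (α : ℚ) (A : Matrix (Fin N) (Fin N) R) (r : Fin N)
    (u v : Fin N → R) (c : R) :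
    adet α (A.updateRow r (u + c • v))
      = adet α (A.updateRow r u) + c * adet α (A.updateRow r v) := by
  simp only [adet, prod_updateRow_perm, Finset.mul_sum, ← Finset.sum_add_distrib, Pi.add_apply,
    Pi.smul_apply, smul_eq_mul]
  congr! 1
  ring

lemma adet_diagonal_mul (α : ℚ) (d : Fin N → R) (A : Matrix (Fin N) (Fin N) R) :
    adet α (diagonal d * A) = (∏ i, d i) * adet α A := by
  simp only [adet, diagonal_mul, Finset.prod_mul_distrib, Equiv.prod_comp, Finset.mul_sum]
  congr! 1
  ring

lemma adet_neg_one_div_eq_zero_of_rows_eq (hk : k ≠ 0) (A : Matrix (Fin N) (Fin N) R)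
    (S : Finset (Fin N)) (hS : k < #S) (v : Fin N → R) (hA : ∀ i ∈ S, A i = v) :
    adet (-(1 : ℚ) / k) A = 0 := by
  rw [adet_neg_one_div_eq_smul_sum_det hk, Finset.sum_eq_zero, smul_zero]
  intro φ _
  obtain ⟨a, ha, b, hb, hab, hφ⟩ := Finset.exists_ne_map_eq_of_card_lt_of_maps_to
    (t := univ) (by simpa using hS) fun x _ => mem_univ (φ x)
  refine det_zero_of_row_eq hab (funext fun j => ?_)
  simp only [colorBlocks, of_apply, hφ, hA a ha, hA b hb]

lemma adet_neg_one_div_updateRow_add_smul (hk : k ≠ 0) (A : Matrix (Fin N) (Fin N) R)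
    (r : Fin N) (S : Finset (Fin N)) (hrS : r ∉ S) (hS : k ≤ #S) (v : Fin N → R)
    (hA : ∀ i ∈ S, A i = v) (c : R) :
    adet (-(1 : ℚ) / k) (A.updateRow r (A r + c • v)) = adet (-(1 : ℚ) / k) A := by
  have hv : adet (-(1 : ℚ) / k) (A.updateRow r v) = 0 := by
    refine adet_neg_one_div_eq_zero_of_rows_eq hk _ (insert r S)
      (by rw [card_insert_of_notMem hrS]; omega) v fun i hi => ?_
    rcases mem_insert.mp hi with rfl | hi
    · exact updateRow_self
    · rw [updateRow_ne (ne_of_mem_of_not_mem hi hrS), hA i hi]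
  rw [adet_updateRow_add_smul, updateRow_eq_self, hv, mul_zero, add_zero]

lemma adet_neg_one_div_add_smul_rows (hk : k ≠ 0) (A : Matrix (Fin N) (Fin N) R)
    {S T : Finset (Fin N)} (hST : Disjoint S T) (hS : k ≤ #S) (v : Fin N → R)
    (hA : ∀ i ∈ S, A i = v) (c : R) :
    adet (-(1 : ℚ) / k) (Matrix.of fun r => A r + if r ∈ T then c • v else 0)
      = adet (-(1 : ℚ) / k) A := by
  induction T using Finset.induction_on with
  | empty =>
    simp only [notMem_empty, if_false, add_zero]
    rfl
  | insert r T hrT ih =>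
    rw [disjoint_insert_right] at hST
    set B : Matrix (Fin N) (Fin N) R := Matrix.of fun s => A s + if s ∈ T then c • v else 0
    have hins : (Matrix.of fun s => A s + if s ∈ insert r T then c • v else 0)
        = B.updateRow r (B r + c • v) := by
      ext s l
      by_cases hs : s = r
      · subst hs
        simp [B, hrT]
      · simp [B, hs]
    rw [hins]
    refine (adet_neg_one_div_updateRow_add_smul hk B r S hST.1 hS v (fun i hi => ?_) c).trans
      (ih hST.2)
    change A i + (if i ∈ T then c • v else 0) = v
    rw [if_neg (disjoint_left.mp hST.2 hi), add_zero, hA i hi]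

end Adet

section Wrdet

variable {R : Type*} [CommRing R] [Algebra ℚ R] {n : ℕ}

lemma prod_divNat {M : Type*} [CommMonoid M] (f : Fin n → M) :
    ∏ r : Fin (n * k), f r.divNat = (∏ i, f i) ^ k := by
  rw [Fintype.prod_equiv finProdFinEquiv.symm _ (fun p => f p.1) fun r => by
    rw [finProdFinEquiv_symm_apply], Fintype.prod_prod_type, ← prod_pow]
  simp

lemma card_filter_divNat_eq (i : Fin n) : #{r : Fin (n * k) | r.divNat = i} = k := by
  refine .trans ?_ (card_fin k)
  refine card_nbij' Fin.modNat (fun j => finProdFinEquiv (i, j)) (fun _ _ => mem_univ _)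
    (fun j _ => mem_filter.mpr ⟨mem_univ _, congrArg Prod.fst
      (finProdFinEquiv.symm_apply_apply (i, j))⟩) (fun r hr => ?_)
    (fun j _ => congrArg Prod.snd (finProdFinEquiv.symm_apply_apply (i, j)))
  rw [← (mem_filter.mp hr).2]
  exact finProdFinEquiv.apply_symm_apply r

lemma wrdet_diagonal_mul (d : Fin n → R) (X : Matrix (Fin n) (Fin (n * k)) R) :
    wrdet k (diagonal d * X) = (∏ i, d i) ^ k * wrdet k X := by
  have hblow : (Matrix.of fun r l : Fin (n * k) => (diagonal d * X) r.divNat l)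
      = diagonal (fun r => d r.divNat) * Matrix.of fun r l => X r.divNat l := by
    ext r l
    simp [diagonal_mul]
  rw [wrdet, hblow, adet_diagonal_mul, prod_divNat]
  rfl

lemma wrdet_transvection_mul (hk : k ≠ 0) {i j : Fin n} (hij : i ≠ j) (c : R)
    (X : Matrix (Fin n) (Fin (n * k)) R) :
    wrdet k (transvection i j c * X) = wrdet k X := by
  have hrows : (Matrix.of fun r l : Fin (n * k) => (transvection i j c * X) r.divNat l)
      = Matrix.of fun r => (Matrix.of fun s l : Fin (n * k) => X s.divNat l) r
        + if r ∈ ({r | r.divNat = i} : Finset (Fin (n * k))) then c • X j else 0 := by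
    ext r l
    by_cases hr : r.divNat = i <;> simp [hr]
  have hdisj : Disjoint ({r | r.divNat = j} : Finset (Fin (n * k)))
      ({r | r.divNat = i} : Finset (Fin (n * k))) :=
    disjoint_filter.mpr fun _ _ hj hi => hij (hi.symm.trans hj)
  rw [wrdet, hrows, adet_neg_one_div_add_smul_rows hk _ hdisj (card_filter_divNat_eq j).ge (X j)
    (fun r hr => funext fun l => by rw [of_apply, (mem_filter.mp hr).2]) c]
  rfl

end Wrdet

lemma wrdet_zero {R : Type*} [CommRing R] [Algebra ℚ R] {n : ℕ}
    (X : Matrix (Fin n) (Fin (n * 0)) R) : wrdet 0 X = 1 := by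
  simp [wrdet, adet, nuPerm]

theorem wrdet_mul {K : Type*} [Field K] [Algebra ℚ K] (k : ℕ) {n : ℕ}
    (M : Matrix (Fin n) (Fin n) K) (X : Matrix (Fin n) (Fin (n * k)) K) :
    wrdet k (M * X) = M.det ^ k * wrdet k X := by
  rcases eq_or_ne k 0 with rfl | hk
  · rw [wrdet_zero, wrdet_zero, pow_zero, one_mul]
  induction M using diagonal_transvection_induction generalizing X with
  | hdiag d _ => rw [wrdet_diagonal_mul, det_diagonal]
  | htransvec t =>
    rw [TransvectionStruct.toMatrix, wrdet_transvection_mul hk t.hij,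
      det_transvection_of_ne _ _ t.hij, one_pow, one_mul]
  | hmul A B hA hB => rw [Matrix.mul_assoc, hA, hB, det_mul, mul_pow, mul_assoc]

theorem wrdet_mul_GL_general (n k : ℕ)
    (g : GL (Fin n) ℂ) (X : Matrix (Fin n) (Fin (n * k)) ℂ) :
    wrdet k ((g : Matrix (Fin n) (Fin n) ℂ) * X)
      = (Matrix.det (g : Matrix (Fin n) (Fin n) ℂ)) ^ k * wrdet k X :=
  wrdet_mul k _ X

/-- For every positive integers n, k, every g ∈ GL_n(ℂ) and every n×(kn) matrix X over ℂ,
one has wrdet_k(gX) = (det g)^k · wrdet_k(X). -/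
theorem wrdet_mul_GL (n k : ℕ) (hn : 0 < n) (hk : 0 < k)
    (g : GL (Fin n) ℂ) (X : Matrix (Fin n) (Fin (n * k)) ℂ) :
    wrdet k ((g : Matrix (Fin n) (Fin n) ℂ) * X)
      = (Matrix.det (g : Matrix (Fin n) (Fin n) ℂ)) ^ k * wrdet k X :=
  wrdet_mul_GL_general n k g X
end

section
/- For every positive integers n, k, every n×(kn) matrix X over ℂ, and every permutation τ of {0,…,kn−1} satisfying ⌊τ(j)/k⌋ = ⌊j/k⌋ for all j (i.e. τ permutes the columns within each of the n consecutive blocks of size k), one has wrdet_k(X·P(τ)) = wrdet_k(X), where P(τ) is the permutation matrix with (i,j)-entry δ_{i,τ(j)}. -/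
/-! Conjugation by τ preserves the cycle type and the fixed-point count of σ, hence the weight
`α ^ ν(σ)`, so the alpha-determinant is invariant under a simultaneous permutation of rows and
columns. Since row `i` of the blowup `X ⊗ 1_{k,1}` depends only on the block `⌊i/k⌋`, a
block-preserving permutation of the columns of `X` acts on the blowup as exactly such a
simultaneous permutation. -/

namespace Equiv.Perm

variable {N : ℕ}

lemma card_filter_apply_eq_self_conj (τ σ : Perm (Fin N)) :
    (Finset.univ.filter fun x => (τ * σ * τ⁻¹) x = x).card =
      (Finset.univ.filter fun x => σ x = x).card := by
  refine Finset.card_bij' (fun a _ => τ⁻¹ a) (fun a _ => τ a) ?_ ?_ (by simp) (by simp)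
  · intro a ha
    rw [Finset.mem_filter_univ] at ha ⊢
    exact eq_inv_iff_eq.2 ha
  · intro a ha
    rw [Finset.mem_filter_univ] at ha ⊢
    simp [ha]

lemma cycleCount_conj (τ σ : Perm (Fin N)) : cycleCount (τ * σ * τ⁻¹) = cycleCount σ := by
  rw [cycleCount, cycleCount, cycleType_conj, card_filter_apply_eq_self_conj]

lemma nuPerm_conj (τ σ : Perm (Fin N)) : nuPerm (τ * σ * τ⁻¹) = nuPerm σ := by
  rw [nuPerm, nuPerm, cycleCount_conj]

end Equiv.Perm

lemma adet_submatrix_perm {R : Type*} [CommRing R] [Algebra ℚ R] (α : ℚ) {N : ℕ}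
    (X : Matrix (Fin N) (Fin N) R) (τ : Equiv.Perm (Fin N)) :
    adet α (X.submatrix τ τ) = adet α X := by
  refine Fintype.sum_equiv (MulAut.conj τ).toEquiv _ _ fun σ => ?_
  simp only [MulEquiv.toEquiv_eq_coe, MulEquiv.coe_toEquiv, MulAut.conj_apply,
    Equiv.Perm.nuPerm_conj]
  congr 1
  refine Fintype.prod_equiv τ _ _ fun i => ?_
  simp

lemma wrdet_submatrix_blockPerm {R : Type*} [CommRing R] [Algebra ℚ R] {n k : ℕ}
    (X : Matrix (Fin n) (Fin (n * k)) R) (τ : Equiv.Perm (Fin (n * k)))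
    (hτ : ∀ j, (τ j).divNat = j.divNat) :
    wrdet k (X.submatrix id τ) = wrdet k X := by
  rw [wrdet, wrdet, ← adet_submatrix_perm _ (Matrix.of fun i j => X i.divNat j) τ]
  congr 1
  ext i j
  simp [hτ]

lemma mul_of_ite_eq_apply_eq_submatrix {R : Type*} [NonAssocSemiring R] {m N : Type*} [Fintype N]
    [DecidableEq N] (X : Matrix m N R) (τ : Equiv.Perm N) :
    X * Matrix.of (fun i j : N => if i = τ j then (1 : R) else 0) = X.submatrix id τ := by
  have hP : Matrix.of (fun i j : N => if i = τ j then (1 : R) else 0) =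
      (1 : Matrix N N R).submatrix (Equiv.refl N) τ := by
    ext i j
    simp [Matrix.one_apply]
  rw [hP, Matrix.mul_submatrix_one]
  rfl

theorem wrdet_mul_blockPerm_general (n k : ℕ)
    (X : Matrix (Fin n) (Fin (n * k)) ℂ)
    (τ : Equiv.Perm (Fin (n * k)))
    (hτ : ∀ j : Fin (n * k), (τ j : ℕ) / k = (j : ℕ) / k) :
    wrdet k (X * Matrix.of fun i j : Fin (n * k) => if i = τ j then (1 : ℂ) else 0)
      = wrdet k X := by
  rw [mul_of_ite_eq_apply_eq_submatrix]
  exact wrdet_submatrix_blockPerm X τ fun j => Fin.ext (hτ j)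

/-- For every positive integers n, k, every n×(kn) matrix X over ℂ, and every
permutation τ of the columns preserving the n consecutive blocks of size k
(i.e. ⌊τ(j)/k⌋ = ⌊j/k⌋ for all j), one has wrdet_k(X·P(τ)) = wrdet_k(X),
where P(τ) is the permutation matrix with (i,j)-entry δ_{i,τ(j)}. -/
theorem wrdet_mul_blockPerm (n k : ℕ) (hn : 0 < n) (hk : 0 < k)
    (X : Matrix (Fin n) (Fin (n * k)) ℂ)
    (τ : Equiv.Perm (Fin (n * k)))
    (hτ : ∀ j : Fin (n * k), (τ j : ℕ) / k = (j : ℕ) / k) :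
    wrdet k (X * Matrix.of fun i j : Fin (n * k) => if i = τ j then (1 : ℂ) else 0)
      = wrdet k X :=
  wrdet_mul_blockPerm_general n k X τ hτ
end

section
/- Let n, k be positive integers and m = kn. Then over ℂ[x] one has the matrix factorization T(m,n;x) = P(σ) · (T(n;x^k) ⊗ 1_{1,k}) · (I_n ⊗ diag(x^{k−1}, x^{k−2}, …, x, 1)) · P(τ)^{−1}, where σ is the n-cycle i ↦ (i+1) mod n of {0,…,n−1}, τ is the m-cycle j ↦ (j+1) mod m of {0,…,m−1}, P(ρ) denotes the permutation matrix with (i,j)-entry δ_{i,ρ(j)}, 1_{1,k} is the 1×k all-ones matrix, and ⊗ denotes the Kronecker product. -/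
/-!
Conjugating by the two cycles, it suffices to compare the entries at `(σ i, τ j)`. There the
left side has exponent `(k(i+1) - (j+1)) mod kn`. Writing `j = kq + r` with `0 ≤ r < k`, this is
`(k(i - q) + (k-1-r)) mod kn = k((i - q) mod n) + (k-1-r)`, because `0 ≤ k-1-r < k`; and the right
side has entry `(x^k)^((i - q) mod n) · x^(k-1-r)`, since `I_n ⊗ diag(…)` is diagonal with entry
`x^(k-1-(j mod k))` at `j`.
-/

/-- `Tmat m n x` is the n×m matrix over ℂ[x] with (i,j)-entry x^{((k·i − j) mod m)}
for 0 ≤ i < n, 0 ≤ j < m, where k = m/n (so m = kn when n divides m). -/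
noncomputable def Tmat (m n : ℕ) (x : Polynomial ℂ) : Matrix (Fin n) (Fin m) (Polynomial ℂ) :=
  Matrix.of fun i j => x ^ ((((m / n : ℕ) * (i : ℕ) : ℤ) - (j : ℕ)) % (m : ℤ)).toNat

/-- Kronecker product with flat indices: for A of size a×b and B of size c×d,
(A ⊗ B)(i,j) = A(⌊i/c⌋, ⌊j/d⌋) · B(i mod c, j mod d). -/
def kron {R : Type*} [Mul R] {a b c d : ℕ}
    (A : Matrix (Fin a) (Fin b) R) (B : Matrix (Fin c) (Fin d) R) :
    Matrix (Fin (a * c)) (Fin (b * d)) R :=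
  Matrix.of fun i j => A i.divNat j.divNat * B i.modNat j.modNat

/-- The permutation matrix P(ρ) with (i,j)-entry δ_{i,ρ(j)}. -/
noncomputable def Pmat {N : ℕ} (ρ : Equiv.Perm (Fin N)) : Matrix (Fin N) (Fin N) (Polynomial ℂ) :=
  Matrix.of fun i j => if i = ρ j then 1 else 0

theorem Int.mul_add_emod_mul_of_lt {k n s : ℤ} (t : ℤ) (hn : 0 < n) (hs₀ : 0 ≤ s) (hs : s < k) :
    (k * t + s) % (k * n) = k * (t % n) + s := by
  have hmod : k * t + s ≡ k * (t % n) + s [ZMOD k * n] :=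
    (Int.ModEq.mul_left' (Int.mod_modEq t n).symm).add_right s
  have hk : 0 ≤ k := by omega
  have hr₀ : 0 ≤ t % n := Int.emod_nonneg t hn.ne'
  have hr : t % n < n := Int.emod_lt_of_pos t hn
  rw [hmod.eq, Int.emod_eq_of_lt (by positivity) (by nlinarith)]

theorem finRotate_modEq {N : ℕ} (i : Fin N) : ((finRotate N i : ℕ) : ℤ) ≡ i + 1 [ZMOD N] := by
  cases N with
  | zero => exact i.elim0
  | succ N =>
    rw [finRotate_apply, Fin.val_add, Fin.val_one']
    exact_mod_cast Int.natCast_modEq_iff.mpr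
      ((Nat.mod_modEq _ _).trans ((Nat.mod_modEq _ _).add_left _))

namespace Matrix

theorem inv_permMatrix {n R : Type*} [Fintype n] [DecidableEq n] [CommRing R] (σ : Equiv.Perm n) :
    (σ.permMatrix R)⁻¹ = (σ⁻¹).permMatrix R :=
  inv_eq_right_inv <| by rw [← permMatrix_mul, inv_mul_cancel, permMatrix_one]

end Matrix

theorem Pmat_eq_permMatrix {N : ℕ} (ρ : Equiv.Perm (Fin N)) : Pmat ρ = (ρ⁻¹).permMatrix _ := by
  ext i j : 1
  simp [Pmat, PEquiv.toMatrix_apply, Equiv.Perm.inv_def, Equiv.eq_symm_apply, eq_comm]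

theorem Pmat_mul_mul_inv_Pmat {a b : ℕ} (ρ : Equiv.Perm (Fin a)) (τ : Equiv.Perm (Fin b))
    (M : Matrix (Fin a) (Fin b) (Polynomial ℂ)) :
    Pmat ρ * M * (Pmat τ)⁻¹ = M.submatrix ρ.symm τ.symm := by
  rw [Pmat_eq_permMatrix, Pmat_eq_permMatrix, Matrix.inv_permMatrix, inv_inv,
    PEquiv.toMatrix_toPEquiv_mul, PEquiv.mul_toMatrix_toPEquiv, Matrix.submatrix_submatrix]
  rfl

theorem kron_one_diagonal {R : Type*} [MulZeroOneClass R] {a c : ℕ} (d : Fin c → R) :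
    kron (1 : Matrix (Fin a) (Fin a) R) (Matrix.diagonal d) =
      Matrix.diagonal fun j => d j.modNat := by
  ext i j : 1
  by_cases hij : i = j
  · simp [kron, hij]
  · have : i.divNat ≠ j.divNat ∨ i.modNat ≠ j.modNat := by
      by_contra! h
      exact hij (finProdFinEquiv.symm.injective (Prod.ext h.1 h.2))
    rcases this with h | h <;> simp [kron, hij, h]

theorem Tmat_apply_of_eq_mul {m n k : ℕ} (h : m = n * k) (x : Polynomial ℂ)
    (i : Fin n) (j : Fin m) :
    Tmat m n x i j = x ^ ((((k : ℤ) * i - j) % m).toNat) := by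
  subst h
  rw [Tmat, Matrix.of_apply, Nat.mul_div_cancel_left k i.pos]

theorem finRotate_exponent_eq {n k : ℕ} (i : Fin n) (j : Fin (n * k)) :
    (((k : ℤ) * (finRotate n i : ℕ) - (finRotate (n * k) j : ℕ)) % (n * k : ℕ)).toNat
      = k * (((i : ℤ) - ((j : ℕ) / k : ℕ)) % n).toNat + (k - 1 - (j : ℕ) % k) := by
  have hn : 0 < (n : ℤ) := by exact_mod_cast i.pos
  have hr : (j : ℕ) % k < k := Nat.mod_lt _ (Nat.pos_of_mul_pos_left j.pos)
  have hj : ((j : ℕ) : ℤ) = k * ((j / k : ℕ) : ℤ) + ((j % k : ℕ) : ℤ) := by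
    exact_mod_cast (Nat.div_add_mod j k).symm
  have hσ := (finRotate_modEq i).mul_left' (c := k)
  have hτ := finRotate_modEq j
  rw [Nat.cast_mul, mul_comm (n : ℤ)] at hτ ⊢
  have hmod : (k : ℤ) * (finRotate n i : ℕ) - (finRotate (n * k) j : ℕ)
      ≡ k * ((i : ℤ) - ((j : ℕ) / k : ℕ)) + ((k - 1 - (j : ℕ) % k : ℕ) : ℤ) [ZMOD k * n] := by
    refine (hσ.sub hτ).trans ?_
    unfold Int.ModEq
    congr 1
    rw [hj, Nat.cast_sub (by omega), Nat.cast_sub (by omega)]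
    ring
  obtain ⟨b, hb⟩ := Int.eq_ofNat_of_zero_le (Int.emod_nonneg ((i : ℤ) - ((j : ℕ) / k : ℕ)) hn.ne')
  rw [hmod.eq, Int.mul_add_emod_mul_of_lt _ hn (by positivity) (by omega), hb]
  norm_cast

theorem Tmat_factorization_general (n k : ℕ) :
    Tmat (n * k) n Polynomial.X
      = Pmat (finRotate n)
        * Matrix.reindex (finCongr (Nat.mul_one n)) (Equiv.refl (Fin (n * k)))
            (kron (Tmat n n (Polynomial.X ^ k))
              (Matrix.of fun (_ : Fin 1) (_ : Fin k) => (1 : Polynomial ℂ) : Matrix (Fin 1) (Fin k) (Polynomial ℂ)))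
        * kron (1 : Matrix (Fin n) (Fin n) (Polynomial ℂ))
            (Matrix.diagonal fun j : Fin k => Polynomial.X ^ (k - 1 - (j : ℕ)))
        * (Pmat (finRotate (n * k)))⁻¹ := by
  rw [Matrix.mul_assoc (Pmat _), Pmat_mul_mul_inv_Pmat, kron_one_diagonal]
  ext i j : 1
  obtain ⟨i, rfl⟩ := (finRotate n).surjective i
  obtain ⟨j, rfl⟩ := (finRotate (n * k)).surjective j
  simp only [Matrix.submatrix_apply, Equiv.symm_apply_apply, Matrix.mul_diagonal,
    Matrix.reindex_apply, kron, Matrix.of_apply, Tmat_apply_of_eq_mul rfl,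
    Tmat_apply_of_eq_mul (Nat.mul_one n).symm, Equiv.refl_symm, Equiv.refl_apply, finCongr_symm,
    finCongr_apply, Fin.coe_divNat, Fin.coe_modNat, Fin.val_cast, Nat.div_one, Nat.cast_one,
    one_mul, mul_one, ← pow_mul, ← pow_add]
  rw [finRotate_exponent_eq]

/-- The factorization
T(m,n;x) = P(σ) · (T(n;x^k) ⊗ 1_{1,k}) · (I_n ⊗ diag(x^{k−1},…,x,1)) · P(τ)^{−1},
where m = kn, σ is the n-cycle i ↦ i+1 (mod n) and τ the m-cycle j ↦ j+1 (mod m). -/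
theorem Tmat_factorization (n k : ℕ) (hn : 0 < n) (hk : 0 < k) :
    Tmat (n * k) n Polynomial.X
      = Pmat (finRotate n)
        * Matrix.reindex (finCongr (Nat.mul_one n)) (Equiv.refl (Fin (n * k)))
            (kron (Tmat n n (Polynomial.X ^ k))
              (Matrix.of fun (_ : Fin 1) (_ : Fin k) => (1 : Polynomial ℂ) : Matrix (Fin 1) (Fin k) (Polynomial ℂ)))
        * kron (1 : Matrix (Fin n) (Fin n) (Polynomial ℂ))
            (Matrix.diagonal fun j : Fin k => Polynomial.X ^ (k - 1 - (j : ℕ)))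
        * (Pmat (finRotate (n * k)))⁻¹ :=
  Tmat_factorization_general n k
end

section
/- Let l ≥ 1 and let m_1,…,m_l and n_1,…,n_l be positive integers with n_s dividing m_s for each s. Put k_s = m_s/n_s, M_s = ∏_{i<s} m_i, N_s = ∏_{i<s} n_i, m = ∏_s m_s, n = ∏_s n_s. Define ε(i,j) = ∑_{s=1}^l M_s · ((k_s⌊i/N_s⌋ − ⌊j/M_s⌋) mod m_s) for 0 ≤ i < n, 0 ≤ j < m. Then the n×m matrix over ℂ[q] with (i,j)-entry q^{ε(i,j)} equals the Kronecker product T(m_l,n_l;q^{M_l}) ⊗ T(m_{l−1},n_{l−1};q^{M_{l−1}}) ⊗ ⋯ ⊗ T(m_1,n_1;q^{M_1}). -/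
/-- Iterated Kronecker product A_{l-1} ⊗ A_{l-2} ⊗ ⋯ ⊗ A_0 (the factor with the
largest index on the left), with flat indices. -/
noncomputable def kronIter {R : Type*} [CommRing R] (ns ms : ℕ → ℕ)
    (A : (s : ℕ) → Matrix (Fin (ns s)) (Fin (ms s)) R) :
    (l : ℕ) → Matrix (Fin (∏ s ∈ Finset.range l, ns s)) (Fin (∏ s ∈ Finset.range l, ms s)) R
  | 0 => Matrix.reindex (finCongr (by simp)) (finCongr (by simp)) (1 : Matrix (Fin 1) (Fin 1) R)
  | (l + 1) =>
      Matrix.reindex (finCongr (by rw [Finset.prod_range_succ, Nat.mul_comm]))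
        (finCongr (by rw [Finset.prod_range_succ, Nat.mul_comm]))
        (kron (A l) (kronIter ns ms A l))

open Finset

theorem Nat.mod_prod_range_div_prod_range_mod (f : ℕ → ℕ) {s l : ℕ} (hsl : s < l) (i : ℕ) :
    i % (∏ t ∈ range l, f t) / (∏ t ∈ range s, f t) % f s = i / (∏ t ∈ range s, f t) % f s := by
  rw [← prod_range_mul_prod_Ico f hsl.le, prod_eq_prod_Ico_succ_bot hsl,
    Nat.mod_mul_right_div_self, Nat.mod_mul_right_mod]

theorem kronIter_apply {R : Type*} [CommRing R] (ns ms : ℕ → ℕ)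
    (A : (s : ℕ) → Matrix (Fin (ns s)) (Fin (ms s)) R) (f : ℕ → ℕ → ℕ → R)
    (hA : ∀ s i j, A s i j = f s i j) (l : ℕ)
    (i : Fin (∏ s ∈ range l, ns s)) (j : Fin (∏ s ∈ range l, ms s)) :
    kronIter ns ms A l i j = ∏ s ∈ range l,
      f s (i / (∏ t ∈ range s, ns t) % ns s) (j / (∏ t ∈ range s, ms t) % ms s) := by
  induction l with
  | zero =>
    simp only [kronIter, range_zero, prod_empty]
    exact if_pos (Subsingleton.elim _ _)
  | succ l ih =>
    have top_digit {N n : ℕ} (x : ℕ) (hx : x < N * n) : x / N % n = x / N :=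
      Nat.mod_eq_of_lt (Nat.div_lt_of_lt_mul hx)
    have hi : (i : ℕ) < (∏ t ∈ range l, ns t) * ns l := prod_range_succ ns l ▸ i.isLt
    have hj : (j : ℕ) < (∏ t ∈ range l, ms t) * ms l := prod_range_succ ms l ▸ j.isLt
    simp only [kronIter, kron, Matrix.reindex_apply, Matrix.submatrix_apply, Matrix.of_apply,
      finCongr_symm, finCongr_apply, hA, ih, Fin.coe_divNat, Fin.coe_modNat, Fin.val_cast]
    rw [prod_range_succ_comm (fun s => f s _ _), top_digit i hi, top_digit j hj]
    congr 1
    refine prod_congr rfl fun s hs => ?_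
    rw [Nat.mod_prod_range_div_prod_range_mod ns (mem_range.mp hs),
      Nat.mod_prod_range_div_prod_range_mod ms (mem_range.mp hs)]

theorem Int.natCast_div_mul_sub_emod_of_dvd {m n : ℕ} (hnm : n ∣ m) (a b : ℕ) :
    (((m / n * a : ℕ) : ℤ) - (b : ℤ)) % (m : ℤ)
      = (((m / n * (a % n) : ℕ) : ℤ) - ((b % m : ℕ) : ℤ)) % (m : ℤ) := by
  have ha : m / n * a ≡ m / n * (a % n) [MOD m] := by
    simpa only [Nat.div_mul_cancel hnm] using (Nat.mod_modEq a n).symm.mul_left' (m / n)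
  have hb : b ≡ b % m [MOD m] := (Nat.mod_modEq b m).symm
  exact (Int.natCast_modEq_iff.mpr ha).sub (Int.natCast_modEq_iff.mpr hb)

theorem abelian_matrix_kronecker_general (l : ℕ) (ms ns : ℕ → ℕ)
    (hpos : ∀ s < l, 0 < ms s ∧ 0 < ns s ∧ ns s ∣ ms s) :
    (Matrix.of fun (i : Fin (∏ s ∈ Finset.range l, ns s))
        (j : Fin (∏ s ∈ Finset.range l, ms s)) =>
      (Polynomial.X : Polynomial ℂ) ^
        (∑ s ∈ Finset.range l,
          (∏ t ∈ Finset.range s, ms t) *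
            (((((ms s / ns s : ℕ) * ((i : ℕ) / ∏ t ∈ Finset.range s, ns t) : ℕ) : ℤ)
                - (((j : ℕ) / ∏ t ∈ Finset.range s, ms t : ℕ) : ℤ)) % (ms s : ℤ)).toNat))
      = kronIter ns ms
          (fun s => Tmat (ms s) (ns s) (Polynomial.X ^ (∏ t ∈ Finset.range s, ms t))) l := by
  refine Matrix.ext fun i j => ?_
  rw [Matrix.of_apply, ← prod_pow_eq_pow_sum, kronIter_apply ns ms
    (fun s => Tmat (ms s) (ns s) (Polynomial.X ^ ∏ t ∈ range s, ms t))
    (fun s a b =>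
      (Polynomial.X ^ ∏ t ∈ range s, ms t) ^ ((((ms s / ns s * a : ℕ) : ℤ) - b) % ms s).toNat)
    fun _ _ _ => rfl]
  refine prod_congr rfl fun s hs => ?_
  rw [pow_mul, Int.natCast_div_mul_sub_emod_of_dvd (hpos s (mem_range.mp hs)).2.2]

/-- For n_s | m_s (s = 1,…,l), with k_s = m_s/n_s, M_s = ∏_{i<s} m_i, N_s = ∏_{i<s} n_i,
the n×m matrix with (i,j)-entry q^{ε(i,j)}, where
ε(i,j) = ∑_s M_s ((k_s⌊i/N_s⌋ − ⌊j/M_s⌋) mod m_s), equals the Kronecker product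
T(m_l,n_l;q^{M_l}) ⊗ ⋯ ⊗ T(m_1,n_1;q^{M_1}). -/
theorem abelian_matrix_kronecker (l : ℕ) (hl : 1 ≤ l) (ms ns : ℕ → ℕ)
    (hpos : ∀ s < l, 0 < ms s ∧ 0 < ns s ∧ ns s ∣ ms s) :
    (Matrix.of fun (i : Fin (∏ s ∈ Finset.range l, ns s))
        (j : Fin (∏ s ∈ Finset.range l, ms s)) =>
      (Polynomial.X : Polynomial ℂ) ^
        (∑ s ∈ Finset.range l,
          (∏ t ∈ Finset.range s, ms t) *
            (((((ms s / ns s : ℕ) * ((i : ℕ) / ∏ t ∈ Finset.range s, ns t) : ℕ) : ℤ)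
                - (((j : ℕ) / ∏ t ∈ Finset.range s, ms t : ℕ) : ℤ)) % (ms s : ℤ)).toNat))
      = kronIter ns ms
          (fun s => Tmat (ms s) (ns s) (Polynomial.X ^ (∏ t ∈ Finset.range s, ms t))) l :=
  abelian_matrix_kronecker_general l ms ns hpos
end

section
/- Let n ≥ 2 and k ≥ 1 be integers, and let X = (x_{ij}) be the n×n matrix of independent indeterminates over ℚ. Then the coefficient of the monomial (x_{11}x_{22}⋯x_{nn})^{k−1} · x_{12}x_{23}⋯x_{n−1,n}x_{n1} in the polynomial (det X)^k equals (−1)^{n−1}·k. -/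
/-!
Expanding `(det X)^k` into a product of `k` Leibniz sums, the coefficient of a monomial is the
signed number of `k`-tuples of permutations whose graphs, counted with multiplicity, add up to its
exponent. For `(x₁₁⋯xₙₙ)^(k-1) x₁₂⋯xₙ₁` each permutation of such a tuple sends every `i` to `i` or
`i + 1`, which forces it to be the identity or the rotation `i ↦ i + 1`; since `x₁₂` occurs only
once, exactly one of them is the rotation. This leaves `k` tuples, each of sign
`sign (finRotate n) = (-1)^(n-1)`.
-/

open MvPolynomial Finset Equiv Matrix

theorem Pi.mulSingle_left_injective {ι M : Type*} [DecidableEq ι] [One M] {x : M} (hx : x ≠ 1) :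
    Function.Injective fun i : ι => Pi.mulSingle i x := by
  intro i j hij
  by_contra hne
  exact hx (by simpa [Pi.mulSingle_eq_of_ne hne] using congrFun hij i)

open Fin.NatCast in
theorem Fin.perm_eq_one_or_finRotate {n : ℕ} [NeZero n] (σ : Perm (Fin n))
    (h : ∀ i, σ i = i ∨ σ i = i + 1) : σ = 1 ∨ σ = finRotate n := by
  by_cases hfix : ∀ i, σ i = i
  · exact .inl (Equiv.ext hfix)
  push Not at hfix
  obtain ⟨a, ha⟩ := hfix
  have hstep : ∀ i, σ i = i + 1 → σ (i + 1) = i + 1 + 1 := by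
    intro i hi
    rcases h (i + 1) with h' | h'
    · have hi1 : i + 1 = i := σ.injective (h'.trans hi.symm)
      rw [h', hi1, hi1]
    · exact h'
  have hall : ∀ j : ℕ, σ (a + j) = a + j + 1 := by
    intro j
    induction j with
    | zero => simpa using (h a).resolve_left ha
    | succ j ih => simpa [add_assoc] using hstep _ ih
  refine .inr (Equiv.ext fun b => ?_)
  have hb : a + ((b - a : Fin n) : ℕ) = b := by
    rw [Fin.cast_val_eq_self]; abel
  rw [finRotate_apply, ← hb, hall]

section GraphExponent

variable {n R : Type*} [Fintype n]

noncomputable def graphExponent (σ : Perm n) : n × n →₀ ℕ :=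
  ∑ i, Finsupp.single (i, σ i) 1

theorem sum_graphExponent_mulSingle {ι : Type*} [Fintype ι] [DecidableEq ι] (t₀ : ι)
    (c : Perm n) :
    ∑ t, graphExponent ((Pi.mulSingle t₀ c : ι → Perm n) t) =
      graphExponent c + (Fintype.card ι - 1) • graphExponent 1 := by
  rw [Fintype.sum_eq_add_sum_compl t₀, Pi.mulSingle_eq_same,
    Finset.sum_congr rfl fun t ht => congrArg graphExponent
      (Pi.mulSingle_eq_of_ne (M := fun _ => Perm n) (by simpa using ht) c),
    Finset.sum_const, Finset.card_compl, Finset.card_singleton]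

variable [DecidableEq n]

theorem graphExponent_apply (σ : Perm n) (a b : n) :
    graphExponent σ (a, b) = if σ a = b then 1 else 0 := by
  simp [graphExponent, Finsupp.finsetSum_apply, Finsupp.single_apply, ite_and]

theorem sum_graphExponent_apply {ι : Type*} [Fintype ι] (g : ι → Perm n) (a b : n) :
    (∑ t, graphExponent (g t)) (a, b) = #{t | g t a = b} := by
  simp only [Finsupp.finsetSum_apply, graphExponent_apply, Finset.card_filter]

variable [CommRing R]

theorem det_mvPolynomialX_eq_sum :
    det (mvPolynomialX n n R) =
      ∑ σ : Perm n, monomial (graphExponent σ) ((Perm.sign σ : ℤ) : R) := by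
  rw [← det_transpose, det_apply]
  refine Finset.sum_congr rfl fun σ _ => ?_
  simp only [transpose_apply, mvPolynomialX_apply, X, graphExponent, monomial_sum_index,
    Units.smul_def, zsmul_eq_mul, map_intCast]

theorem coeff_det_mvPolynomialX_pow (k : ℕ) (m : n × n →₀ ℕ) :
    coeff m (det (mvPolynomialX n n R) ^ k) =
      ∑ g : Fin k → Perm n with ∑ t, graphExponent (g t) = m,
        ∏ t, ((Perm.sign (g t) : ℤ) : R) := by
  simp only [det_mvPolynomialX_eq_sum, Fintype.sum_pow, ← monomial_sum_prod, coeff_sum,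
    coeff_monomial, Finset.sum_ite, Finset.sum_const_zero, add_zero]

theorem prod_sign_mulSingle {ι : Type*} [Fintype ι] [DecidableEq ι] (t₀ : ι) (c : Perm n) :
    ∏ t, ((Perm.sign ((Pi.mulSingle t₀ c : ι → Perm n) t) : ℤ) : R) = ((Perm.sign c : ℤ) : R) := by
  rw [← Fintype.prod_pi_mulSingle' t₀ ((Perm.sign c : ℤ) : R)]
  refine Finset.prod_congr rfl fun t _ => ?_
  exact Pi.apply_mulSingle (fun _ σ => ((Perm.sign σ : ℤ) : R)) (fun _ => by simp) t₀ c t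

end GraphExponent

noncomputable def cycleExponent (n k : ℕ) : Fin n × Fin n →₀ ℕ :=
  Finsupp.equivFunOnFinite.symm fun p =>
    if p.1 = p.2 then k - 1 else if (p.2 : ℕ) = ((p.1 : ℕ) + 1) % n then 1 else 0

section CycleExponent

variable {m k : ℕ}

theorem cycleExponent_apply (a b : Fin (m + 2)) :
    cycleExponent (m + 2) k (a, b) = if a = b then k - 1 else if b = a + 1 then 1 else 0 := by
  have hsucc : (b : ℕ) = ((a : ℕ) + 1) % (m + 2) ↔ b = a + 1 := by
    rw [Fin.ext_iff, Fin.val_add, Fin.val_one]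
  simp only [cycleExponent, Finsupp.equivFunOnFinite_symm_apply_apply, hsucc]

theorem cycleExponent_eq :
    cycleExponent (m + 2) k = graphExponent (finRotate (m + 2)) + (k - 1) • graphExponent 1 := by
  ext ⟨a, b⟩
  simp only [cycleExponent_apply, Finsupp.add_apply, Finsupp.smul_apply, graphExponent_apply,
    finRotate_apply, Perm.coe_one, id_eq, smul_eq_mul]
  rcases eq_or_ne a b with rfl | hab
  · simp
  · simp [hab, eq_comm]

theorem eq_one_or_finRotate_of_sum_graphExponent_eq {g : Fin k → Perm (Fin (m + 2))}
    (h : ∑ t, graphExponent (g t) = cycleExponent (m + 2) k) (t : Fin k) :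
    g t = 1 ∨ g t = finRotate (m + 2) := by
  refine Fin.perm_eq_one_or_finRotate _ fun a => ?_
  have hpos : 0 < #{s | g s a = g t a} := Finset.card_pos.2 ⟨t, by simp⟩
  rw [← sum_graphExponent_apply, h, cycleExponent_apply] at hpos
  split_ifs at hpos with h₁ h₂
  · exact .inl h₁.symm
  · exact .inr h₂
  · exact (lt_irrefl 0 hpos).elim

theorem sum_graphExponent_eq_cycleExponent_iff (g : Fin k → Perm (Fin (m + 2))) :
    ∑ t, graphExponent (g t) = cycleExponent (m + 2) k ↔
      ∃ t₀, Pi.mulSingle t₀ (finRotate (m + 2)) = g := by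
  constructor
  · intro h
    have hcount : #{t | g t 0 = 1} = 1 := by
      rw [← sum_graphExponent_apply, h, cycleExponent_apply]
      simp
    obtain ⟨t₀, ht₀⟩ := Finset.card_eq_one.1 hcount
    refine ⟨t₀, funext fun t => ?_⟩
    have hmem : g t 0 = 1 ↔ t = t₀ := by simpa using Finset.ext_iff.1 ht₀ t
    rcases eq_one_or_finRotate_of_sum_graphExponent_eq h t with h₁ | h₁
    · have : t ≠ t₀ := by simp [← hmem, h₁]
      rw [Pi.mulSingle_eq_of_ne this, h₁]
    · have : t = t₀ := hmem.1 (by simp [h₁, finRotate_apply])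
      rw [this, Pi.mulSingle_eq_same, ← this, h₁]
  · rintro ⟨t₀, rfl⟩
    rw [sum_graphExponent_mulSingle, cycleExponent_eq, Fintype.card_fin]

end CycleExponent

theorem coeff_det_pow_cycle_general (n k : ℕ) (hn : 2 ≤ n) :
    MvPolynomial.coeff
      (Finsupp.equivFunOnFinite.symm fun p : Fin n × Fin n =>
        if p.1 = p.2 then k - 1
        else if (p.2 : ℕ) = ((p.1 : ℕ) + 1) % n then 1 else 0)
      ((Matrix.det (Matrix.of fun i j : Fin n =>
          (MvPolynomial.X (i, j) : MvPolynomial (Fin n × Fin n) ℚ))) ^ k)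
      = (-1 : ℚ) ^ (n - 1) * k := by
  obtain ⟨m, rfl⟩ : ∃ m, n = m + 2 := ⟨n - 2, by omega⟩
  have hfilter : ({g : Fin k → Perm (Fin (m + 2)) |
      ∑ t, graphExponent (g t) = cycleExponent (m + 2) k} : Finset _) =
      univ.image fun t₀ => Pi.mulSingle t₀ (finRotate (m + 2)) := by
    ext g
    simp [sum_graphExponent_eq_cycleExponent_iff]
  change coeff (cycleExponent (m + 2) k) (det (mvPolynomialX _ _ ℚ) ^ k) = _
  rw [coeff_det_mvPolynomialX_pow, hfilter,
    sum_image (Pi.mulSingle_left_injective (isCycle_finRotate (n := m)).ne_one).injOn]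
  simp [prod_sign_mulSingle, sign_finRotate, mul_comm]

/-- Let X = (x_{ij}) be the generic n×n matrix of independent indeterminates over ℚ
(n ≥ 2). The coefficient of (x_{11}⋯x_{nn})^{k−1} · x_{12}x_{23}⋯x_{n−1,n}x_{n1}
in (det X)^k equals (−1)^{n−1}·k. -/
theorem coeff_det_pow_cycle (n k : ℕ) (hn : 2 ≤ n) (hk : 1 ≤ k) :
    MvPolynomial.coeff
      (Finsupp.equivFunOnFinite.symm fun p : Fin n × Fin n =>
        if p.1 = p.2 then k - 1
        else if (p.2 : ℕ) = ((p.1 : ℕ) + 1) % n then 1 else 0)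
      ((Matrix.det (Matrix.of fun i j : Fin n =>
          (MvPolynomial.X (i, j) : MvPolynomial (Fin n × Fin n) ℚ))) ^ k)
      = (-1 : ℚ) ^ (n - 1) * k :=
  coeff_det_pow_cycle_general n k hn
end

section
/- Let k ≥ 1 and n ≥ 2 be integers and m = kn. Let K be the subgroup of the symmetric group S_m on {0,…,m−1} consisting of all permutations g with ⌊g(j)/k⌋ = ⌊j/k⌋ for all j (so K ≅ S_k^n, permuting within the n consecutive blocks of size k), and let τ ∈ S_m be the m-cycle j ↦ (j+1) mod m. Then the index of K ∩ τ^{−1}Kτ in K equals k^n. -/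
/-!
Both `K` and `τ⁻¹Kτ` are stabilizers of partitions of `{0, …, nk - 1}`: `K` preserves the
fibres of `j ↦ ⌊j/k⌋` and `τ⁻¹Kτ` those of `j ↦ ⌊τ(j)/k⌋`. Since `n ≥ 2`, the two maps differ
exactly at the top points `ik + k - 1` of the blocks, one in each block. Hence an element of `K`
lies in `τ⁻¹Kτ` iff it fixes every top point, so `K ∩ τ⁻¹Kτ` is the stabilizer in `K` of the
tuple of top points. Its index is the size of the `K`-orbit of that tuple, which consists of all
tuples choosing one point from each block: `k^n` of them.
-/

/-- The subgroup K ≅ S_k^n of the symmetric group on {0,…,nk−1} consisting of the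
permutations preserving each of the n consecutive blocks of size k. -/
def blockSubgroup (n k : ℕ) : Subgroup (Equiv.Perm (Fin (n * k))) where
  carrier := {g | ∀ j : Fin (n * k), (g j : ℕ) / k = (j : ℕ) / k}
  one_mem' := fun _ => rfl
  mul_mem' := by
    intro a b ha hb j
    have h : (a * b) j = a (b j) := rfl
    rw [h, ha, hb]
  inv_mem' := by
    intro a ha j
    have h := ha (a⁻¹ j)
    simpa using h.symm

open Function MulAction Set

namespace Equiv.Perm

variable {α β : Type*}

def fiberSubgroup (p : α → β) : Subgroup (Perm α) where
  carrier := {g | ∀ a, p (g a) = p a}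
  one_mem' _ := rfl
  mul_mem' hg hh a := (hg _).trans (hh a)
  inv_mem' {g} hg a := by simpa using (hg (g⁻¹ a)).symm

variable {p q : α → β}

@[simp]
theorem mem_fiberSubgroup {g : Perm α} : g ∈ fiberSubgroup p ↔ ∀ a, p (g a) = p a := Iff.rfl

theorem map_conj_inv_fiberSubgroup (σ : Perm α) :
    (fiberSubgroup p).map (MulAut.conj σ⁻¹).toMonoidHom = fiberSubgroup (p ∘ σ) := by
  ext g
  rw [Subgroup.mem_map_equiv, MulAut.conj_symm_apply, inv_inv, mem_fiberSubgroup,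
    mem_fiberSubgroup, σ.surjective.forall]
  simp [mul_apply]

theorem subgroupOf_fiberSubgroup_eq_stabilizer {s : β → α} (hs : LeftInverse p s)
    (hq : ∀ a, q a ≠ p a ↔ a ∈ range s) :
    (fiberSubgroup q).subgroupOf (fiberSubgroup p) = stabilizer (fiberSubgroup p) s := by
  ext ⟨g, hg⟩
  rw [mem_fiberSubgroup] at hg
  simp only [Subgroup.mem_subgroupOf, mem_fiberSubgroup, mem_stabilizer_iff, funext_iff,
    Pi.smul_apply, Subgroup.mk_smul, Perm.smul_def]
  have hqp : ∀ a, a ∉ range s → q a = p a := fun a => not_imp_comm.1 (hq a).1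
  constructor
  · intro hgq b
    obtain ⟨b', hb'⟩ : g (s b) ∈ range s := by
      rw [← hq, hgq, hg]
      exact (hq _).2 ⟨b, rfl⟩
    rw [← hb', ← hs b, ← hg, ← hb', hs]
  · intro hgs a
    by_cases ha : a ∈ range s
    · obtain ⟨b, rfl⟩ := ha
      rw [hgs]
    · have hga : g a ∉ range s := by
        rintro ⟨b, hb⟩
        exact ha ⟨b, g.injective (by rw [hgs, hb])⟩
      rw [hqp _ hga, hg, hqp _ ha]

theorem orbit_fiberSubgroup_eq [DecidableEq α] {s : β → α} (hs : LeftInverse p s) :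
    orbit (fiberSubgroup p) s = {x | LeftInverse p x} := by
  ext x
  refine ⟨?_, fun hx => ?_⟩
  · rintro ⟨⟨g, hg⟩, rfl⟩ b
    exact (hg (s b)).trans (hs b)
  set f : α → α := fun a => swap (s (p a)) (x (p a)) a
  have hpf : ∀ a, p (f a) = p a := fun a => by
    simp only [f, swap_apply_def]
    split_ifs <;> simp [hs _, hx _]
  have hf : Involutive f := fun a => by simp only [f, hpf, swap_apply_self]
  refine ⟨⟨hf.toPerm, hpf⟩, funext fun b => ?_⟩
  simp [f, Subgroup.smul_def, Perm.smul_def, hs b]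

theorem relIndex_fiberSubgroup_eq_card_sections {s : β → α} (hs : LeftInverse p s)
    (hq : ∀ a, q a ≠ p a ↔ a ∈ range s) :
    (fiberSubgroup q).relIndex (fiberSubgroup p) = Nat.card {x : β → α // LeftInverse p x} := by
  classical
  rw [Subgroup.relIndex, subgroupOf_fiberSubgroup_eq_stabilizer hs hq, index_stabilizer,
    orbit_fiberSubgroup_eq hs, ← Nat.card_coe_set_eq]
  rfl

end Equiv.Perm

open Equiv.Perm

theorem blockSubgroup_eq_fiberSubgroup (n k : ℕ) :
    blockSubgroup n k = fiberSubgroup Fin.divNat := by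
  ext g
  simp only [mem_fiberSubgroup, Fin.ext_iff, Fin.coe_divNat]
  rfl

theorem Nat.add_one_mod_mul_div_ne_div_iff {n k v : ℕ} (hn : 2 ≤ n) (hv : v < n * (k + 1)) :
    (v + 1) % (n * (k + 1)) / (k + 1) ≠ v / (k + 1) ↔ v % (k + 1) = k := by
  rw [← Nat.succ_mod_succ_eq_zero_iff, ← Nat.dvd_iff_mod_eq_zero]
  rcases Nat.add_one_le_of_lt hv |>.lt_or_eq with hlt | heq
  · rw [Nat.mod_eq_of_lt hlt, Nat.succ_div]
    split_ifs <;> simp_all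
  · have : 2 * (k + 1) ≤ v + 1 := heq ▸ Nat.mul_le_mul_right _ hn
    simp only [heq, Nat.mod_self, Nat.zero_div, dvd_mul_left, iff_true]
    exact (Nat.div_pos (by omega) k.succ_pos).ne

theorem val_finRotate {m : ℕ} [NeZero m] (j : Fin m) : (finRotate m j : ℕ) = (j + 1) % m := by
  rw [finRotate_apply, Fin.val_add, Fin.val_one', Nat.add_mod_mod]

def blockTop (n k : ℕ) : Fin n → Fin (n * (k + 1)) := (Fin.mkDivMod · (Fin.last k))

theorem leftInverse_divNat_blockTop (n k : ℕ) : LeftInverse Fin.divNat (blockTop n k) :=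
  fun i => Fin.divNat_mkDivMod i _

theorem mem_range_blockTop_iff {n k : ℕ} (j : Fin (n * (k + 1))) :
    j ∈ range (blockTop n k) ↔ j.modNat = Fin.last k := by
  refine ⟨?_, fun h => ⟨j.divNat, ?_⟩⟩
  · rintro ⟨i, rfl⟩
    exact Fin.modNat_mkDivMod i _
  · rw [blockTop, ← h, Fin.divNat_mkDivMod_modNat]

theorem divNat_finRotate_ne_iff {n k : ℕ} (hn : 2 ≤ n) (j : Fin (n * (k + 1))) :
    (finRotate _ j).divNat ≠ j.divNat ↔ j ∈ range (blockTop n k) := by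
  have : NeZero (n * (k + 1)) := ⟨by positivity⟩
  rw [mem_range_blockTop_iff, Ne, Fin.ext_iff, Fin.ext_iff, Fin.coe_divNat, Fin.coe_divNat,
    Fin.coe_modNat, Fin.val_last, val_finRotate]
  exact Nat.add_one_mod_mul_div_ne_div_iff hn j.2

theorem card_sections_divNat (n k : ℕ) :
    Nat.card {x : Fin n → Fin (n * k) // LeftInverse Fin.divNat x} = k ^ n := by
  have e : {x : Fin n → Fin (n * k) // LeftInverse Fin.divNat x} ≃ (Fin n → Fin k) :=
    { toFun x i := (x.1 i).modNat
      invFun r := ⟨fun i => Fin.mkDivMod i (r i), fun i => Fin.divNat_mkDivMod i _⟩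
      left_inv x := Subtype.ext <| funext fun i =>
        calc Fin.mkDivMod i (x.1 i).modNat = Fin.mkDivMod (x.1 i).divNat (x.1 i).modNat := by
              rw [x.2 i]
          _ = x.1 i := Fin.divNat_mkDivMod_modNat _
      right_inv r := funext fun i => Fin.modNat_mkDivMod i _ }
  rw [Nat.card_congr e]
  simp

/-- For m = kn (k ≥ 1, n ≥ 2), K the block subgroup ≅ S_k^n of S_m, and τ the m-cycle
j ↦ j+1 (mod m), the index [K : K ∩ τ⁻¹Kτ] equals k^n. -/
theorem relindex_blockSubgroup_conj (k n : ℕ) (hk : 1 ≤ k) (hn : 2 ≤ n) :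
    ((blockSubgroup n k).map (MulAut.conj (finRotate (n * k))⁻¹).toMonoidHom).relIndex
      (blockSubgroup n k) = k ^ n := by
  obtain ⟨k, rfl⟩ := Nat.exists_eq_add_of_le' hk
  rw [blockSubgroup_eq_fiberSubgroup, map_conj_inv_fiberSubgroup,
    relIndex_fiberSubgroup_eq_card_sections (q := Fin.divNat ∘ finRotate _)
      (leftInverse_divNat_blockTop n k) (divNat_finRotate_ne_iff hn), card_sections_divNat]
end

section
/- Let n ≥ 3 be an odd integer and let (x_{ij}) be the generic n×n matrix of independent indeterminates over ℚ. Then the coefficient of the monomial ∏_{1≤i,j≤n} x_{ij} in the polynomial (det(x_{ij}))^n equals 0. -/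
/-!
Swapping two rows of the generic matrix is a renaming of the variables that negates the
determinant, hence also its odd power `det ^ n`, while it fixes the monomial `∏ x_{ij}`.
So that coefficient equals its own negative, and vanishes over `ℚ`.
-/

open MvPolynomial Matrix Equiv

theorem MvPolynomial.coeff_eq_zero_of_rename_eq_neg {σ R : Type*} [CommRing R]
    [IsAddTorsionFree R] (e : σ ≃ σ) {p : MvPolynomial σ R} (hp : rename e p = -p)
    {d : σ →₀ ℕ} (hd : d.mapDomain e = d) : coeff d p = 0 := by
  have h := coeff_rename_mapDomain e e.injective p d
  rw [hp, hd, coeff_neg] at h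
  exact self_eq_neg.mp h.symm

theorem Finsupp.mapDomain_equivFunOnFinite_const {α M : Type*} [Finite α] [AddCommMonoid M]
    (e : α ≃ α) (c : M) :
    (equivFunOnFinite.symm fun _ : α => c).mapDomain e = equivFunOnFinite.symm fun _ => c := by
  rw [← equivMapDomain_eq_mapDomain]
  ext
  simp

theorem Matrix.rename_det_mvPolynomialX_permRows {n R : Type*} [Fintype n] [DecidableEq n]
    [CommRing R] (s : Perm n) :
    rename (s.prodCongr (Equiv.refl n)) (mvPolynomialX n n R).det =
      Perm.sign s • (mvPolynomialX n n R).det := by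
  have hrows : (rename (R := R) (s.prodCongr (Equiv.refl n))).mapMatrix (mvPolynomialX n n R) =
      (mvPolynomialX n n R).submatrix s id := by
    ext i j
    simp [mvPolynomialX]
  rw [AlgHom.map_det, hrows, det_permute, Units.smul_def, zsmul_eq_mul]

/-- For odd n ≥ 3, the coefficient of the monomial ∏_{i,j} x_{ij} in (det(x_{ij}))^n
(for the generic n×n matrix of indeterminates over ℚ) equals 0. -/
theorem coeff_det_pow_allOnes_eq_zero_of_odd (n : ℕ) (hn : 3 ≤ n) (hodd : Odd n) :
    MvPolynomial.coeff (Finsupp.equivFunOnFinite.symm fun _ : Fin n × Fin n => 1)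
      ((Matrix.det (Matrix.of fun i j : Fin n =>
          (MvPolynomial.X (i, j) : MvPolynomial (Fin n × Fin n) ℚ))) ^ n) = 0 := by
  have h01 : (⟨0, by omega⟩ : Fin n) ≠ ⟨1, by omega⟩ := by simp
  set s := swap (⟨0, by omega⟩ : Fin n) ⟨1, by omega⟩
  refine coeff_eq_zero_of_rename_eq_neg (s.prodCongr (Equiv.refl _)) ?_
    (Finsupp.mapDomain_equivFunOnFinite_const _ _)
  change rename _ ((mvPolynomialX (Fin n) (Fin n) ℚ).det ^ n) = _
  rw [map_pow, rename_det_mvPolynomialX_permRows, Perm.sign_swap h01, Units.neg_smul, one_smul,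
    hodd.neg_pow]
  rfl
end

section
/- Let m be a positive integer and let G = D_m = ⟨σ, τ | σ^m = τ^2 = e, στ = τσ^{−1}⟩ be the dihedral group of order 2m. Order G by g_{im+j} = τ^i σ^j (i ∈ {0,1}, 0 ≤ j < m) and specialize f(g_t) = q^t. Let H = ⟨τ⟩ = {e, τ} with rows ordered (e, τ), and let X be the 2×2m matrix over ℂ[q] with (i,j)-entry f(h_i g_j^{−1}). Then wrdet_m(X) = (m!/m^m)^2 · q^{m(m−1)} · (1 − q^{2m})^m. -/
/-- The principal specialization of the dihedral group D_m with the standard ordering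
g_{im+j} = τ^i σ^j: f(σ^j) = q^j and f(τσ^j) = q^{m+j}. -/
noncomputable def dihedralSpec (m : ℕ) : DihedralGroup m → Polynomial ℂ
  | .r i => Polynomial.X ^ i.val
  | .sr i => Polynomial.X ^ (m + i.val)

/-- The standard ordering of the dihedral group D_m: g_{im+j} = τ^i σ^j
(i ∈ {0,1}, 0 ≤ j < m), i.e. first the rotations e, σ, …, σ^{m−1},
then the reflections τ, τσ, …, τσ^{m−1}. -/
def dihedralOrd (m : ℕ) : Fin (2 * m) → DihedralGroup m := fun j =>
  if (j : ℕ) < m then DihedralGroup.r ((j : ℕ) : ZMod m)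
  else DihedralGroup.sr (((j : ℕ) - m : ℕ) : ZMod m)

/-! For `α = -1/k` one has `k^N α^{ν(σ)} = sgn(σ) k^{c(σ)}`, and `k^{c(σ)}` counts the colourings
`κ : [N] → [k]` with `κ ∘ σ = κ`. Hence `k^N adet_{-1/k}(A) = ∑_κ det A_κ`, where `A_κ` keeps the
entries `A i j` with `κ i = κ j` and zeroes the others.

For the matrix behind a wreath determinant, in which every row of `X` is repeated `k` times, `A_κ`
has two equal rows unless `κ` colours the `k` copies of each row bijectively; for such `κ` it is
block diagonal with one `n × n` block per colour. For `D_m` and `H = ⟨τ⟩` the block of colour `c`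
has determinant `q^{a + b} (1 - q^{2m})`, where `a` and `b` each run once through `0, …, m - 1` as
`c` varies. So all `(m!)^2` admissible colourings contribute `q^{m(m-1)} (1 - q^{2m})^m`. -/

open Equiv Finset Polynomial

namespace Equiv.Perm

variable {N : ℕ} (σ : Perm (Fin N))

lemma card_fixed_add_card_support : #{x | σ x = x} + #σ.support = N :=
  (card_filter_add_card_filter_not (s := univ) (fun x => σ x = x)).trans (card_fin N)

lemma card_cycleType_le_sum_cycleType : σ.cycleType.card ≤ σ.cycleType.sum := by
  simpa using Multiset.card_nsmul_le_sum fun _ h => one_le_two.trans (two_le_of_mem_cycleType h)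

lemma nuPerm_eq_sum_sub_card : nuPerm σ = σ.cycleType.sum - σ.cycleType.card := by
  have := σ.card_fixed_add_card_support
  rw [nuPerm, cycleCount, ← sum_cycleType] at *
  omega

lemma sign_eq_neg_one_pow_nuPerm : (sign σ : ℤ) = (-1) ^ nuPerm σ := by
  have hsum := σ.card_cycleType_le_sum_cycleType
  rw [sign_of_cycleType, nuPerm_eq_sum_sub_card,
    show σ.cycleType.sum + σ.cycleType.card
      = (σ.cycleType.sum - σ.cycleType.card) + 2 * σ.cycleType.card by omega,
    pow_add, pow_mul]
  simp

noncomputable def cycleKey (x : Fin N) : {x // σ x = x} ⊕ σ.cycleFactorsFinset :=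
  if h : σ x = x then .inl ⟨x, h⟩
  else .inr ⟨σ.cycleOf x, cycleOf_mem_cycleFactorsFinset_iff.mpr (mem_support.mpr h)⟩

lemma card_cycleKey_codomain :
    Fintype.card ({x // σ x = x} ⊕ σ.cycleFactorsFinset) = cycleCount σ := by
  rw [Fintype.card_sum, Fintype.card_subtype, Fintype.card_coe, cycleCount, cycleType_def,
    Multiset.card_map, add_comm]
  rfl

lemma cycleKey_apply_self (x : Fin N) : σ.cycleKey (σ x) = σ.cycleKey x := by
  by_cases h : σ x = x
  · rw [h]
  · have h' : σ (σ x) ≠ σ x := fun e => h (σ.injective e)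
    simp only [cycleKey, dif_neg h, dif_neg h', cycleOf_self_apply]

lemma sameCycle_of_cycleKey_eq {x y : Fin N} (h : σ.cycleKey x = σ.cycleKey y) :
    σ.SameCycle x y := by
  unfold cycleKey at h
  split_ifs at h with hx hy hy
  · cases h; rfl
  · rw [Sum.inr.injEq, Subtype.mk.injEq] at h
    exact (sameCycle_iff_cycleOf_eq_of_mem_support (mem_support.mpr hx) (mem_support.mpr hy)).mpr h

lemma cycleKey_surjective : Function.Surjective σ.cycleKey := by
  rintro (⟨x, hx⟩ | ⟨c, hc⟩)
  · exact ⟨x, by simp [cycleKey, hx]⟩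
  · obtain ⟨x, hx⟩ := (mem_cycleFactorsFinset_iff.mp hc).1.nonempty_support
    have hσx : σ x ≠ x := (mem_cycleFactorsFinset_iff.mp hc).2 x hx ▸ mem_support.mp hx
    refine ⟨x, ?_⟩
    simp only [cycleKey, dif_neg hσx, ← cycle_is_cycleOf hx hc]

lemma cycleCount_le : cycleCount σ ≤ N :=
  σ.card_cycleKey_codomain ▸
    (Fintype.card_le_of_surjective _ σ.cycleKey_surjective).trans_eq (Fintype.card_fin N)

lemma nuPerm_add_cycleCount : nuPerm σ + cycleCount σ = N :=
  Nat.sub_add_cancel σ.cycleCount_le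

lemma apply_eq_of_sameCycle_s14 {β : Type*} {κ : Fin N → β} (hκ : κ ∘ σ = κ) {x y : Fin N}
    (hxy : σ.SameCycle x y) : κ x = κ y := by
  obtain ⟨i, -, rfl⟩ := hxy.exists_pow_eq'
  have := (Function.Semiconj.iterate_right (f := κ) (gb := id) (congrFun hκ) i) x
  rwa [Function.iterate_id, id, ← coe_pow, eq_comm] at this

/-- Two points have the same `cycleKey` iff they lie in the same cycle, so the `σ`-invariant
colourings are exactly the colourings of the keys. -/
lemma card_filter_comp_eq_self (k : ℕ) :
    #{κ : Fin N → Fin k | κ ∘ σ = κ} = k ^ cycleCount σ := by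
  have hfactor : ({κ : Fin N → Fin k | κ ∘ σ = κ} : Finset _)
      = univ.image fun g => g ∘ σ.cycleKey := by
    ext κ
    simp only [mem_filter, mem_univ, true_and, mem_image]
    constructor
    · intro hκ
      refine ⟨κ ∘ Function.surjInv σ.cycleKey_surjective, funext fun x => ?_⟩
      exact σ.apply_eq_of_sameCycle_s14 hκ
        (σ.sameCycle_of_cycleKey_eq (Function.surjInv_eq σ.cycleKey_surjective _))
    · rintro ⟨g, rfl⟩
      exact funext fun x => congrArg g (σ.cycleKey_apply_self x)
  rw [hfactor, card_image_of_injective _ σ.cycleKey_surjective.injective_comp_right, card_univ,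
    Fintype.card_fun, card_cycleKey_codomain, Fintype.card_fin]

end Equiv.Perm

namespace Matrix

variable {R : Type*} [CommRing R]

def colorMask {ι β : Type*} [DecidableEq β] (κ : ι → β) (A : Matrix ι ι R) : Matrix ι ι R :=
  of fun i j => if κ i = κ j then A i j else 0

lemma det_colorMask {ι β : Type*} [Fintype ι] [DecidableEq ι] [DecidableEq β] (κ : ι → β)
    (A : Matrix ι ι R) :
    (colorMask κ A).det
      = ∑ σ : Perm ι, if κ ∘ σ = κ then (Perm.sign σ : R) * ∏ i, A (σ i) i else 0 := by
  rw [det_apply']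
  refine sum_congr rfl fun σ _ => ?_
  simp only [colorMask, of_apply, Fintype.prod_ite_zero, funext_iff, Function.comp_apply]
  split_ifs <;> simp

lemma sum_det_colorMask {N : ℕ} (k : ℕ) (A : Matrix (Fin N) (Fin N) R) :
    ∑ κ : Fin N → Fin k, (colorMask κ A).det
      = ∑ σ : Perm (Fin N), (k : R) ^ cycleCount σ * ((Perm.sign σ : R) * ∏ i, A (σ i) i) := by
  simp_rw [det_colorMask]
  rw [sum_comm]
  refine sum_congr rfl fun σ _ => ?_
  rw [sum_ite, sum_const_zero, add_zero, sum_const, σ.card_filter_comp_eq_self, nsmul_eq_mul]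
  push_cast
  rfl

lemma natCast_pow_mul_adet {N : ℕ} [Algebra ℚ R] {k : ℕ} (hk : k ≠ 0)
    (A : Matrix (Fin N) (Fin N) R) :
    (k : R) ^ N * adet (-1 / k) A = ∑ κ : Fin N → Fin k, (colorMask κ A).det := by
  rw [sum_det_colorMask, adet, mul_sum]
  refine sum_congr rfl fun σ _ => ?_
  have hscalar : (k : ℚ) ^ N * (-1 / k) ^ nuPerm σ = k ^ cycleCount σ * (-1) ^ nuPerm σ := by
    rw [show (k : ℚ) ^ N = k ^ nuPerm σ * k ^ cycleCount σ by
      rw [← pow_add, σ.nuPerm_add_cycleCount], mul_right_comm, ← mul_pow,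
      mul_div_cancel₀ _ (Nat.cast_ne_zero.mpr hk)]
    ring
  rw [← mul_assoc, ← mul_assoc, σ.sign_eq_neg_one_pow_nuPerm]
  congr 1
  simpa using congrArg (algebraMap ℚ R) hscalar

end Matrix

section Wreath

variable {n k : ℕ}

@[simp]
lemma Fin.divNat_finProdFinEquiv (r : Fin n) (u : Fin k) : (finProdFinEquiv (r, u)).divNat = r :=
  congrArg Prod.fst (finProdFinEquiv.symm_apply_apply (r, u))

@[simp]
lemma Fin.modNat_finProdFinEquiv (r : Fin n) (u : Fin k) : (finProdFinEquiv (r, u)).modNat = u :=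
  congrArg Prod.snd (finProdFinEquiv.symm_apply_apply (r, u))

@[simp]
lemma finProdFinEquiv_divNat_modNat (i : Fin (n * k)) : finProdFinEquiv (i.divNat, i.modNat) = i :=
  finProdFinEquiv.apply_symm_apply i

/-- Colours the `k` copies of row `r` of a blown-up `n × (n * k)` matrix bijectively by `p r`. -/
def blockColoring (p : Fin n → Perm (Fin k)) (i : Fin (n * k)) : Fin k :=
  p i.divNat i.modNat

lemma blockColoring_finProdFinEquiv (p : Fin n → Perm (Fin k)) (r : Fin n) (u : Fin k) :
    blockColoring p (finProdFinEquiv (r, u)) = p r u := by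
  simp [blockColoring]

lemma blockColoring_injective : Function.Injective (blockColoring (n := n) (k := k)) := by
  intro p p' h
  funext r
  refine Equiv.ext fun u => ?_
  simpa [blockColoring_finProdFinEquiv] using congrFun h (finProdFinEquiv (r, u))

lemma exists_blockColoring_eq (κ : Fin (n * k) → Fin k)
    (hκ : ∀ r, Function.Injective fun u => κ (finProdFinEquiv (r, u))) :
    ∃ p, blockColoring p = κ := by
  refine ⟨fun r => Equiv.ofBijective _ (Finite.injective_iff_bijective.mp (hκ r)), ?_⟩
  funext i
  simp [blockColoring]

variable {R : Type*} [CommRing R] (X : Matrix (Fin n) (Fin (n * k)) R)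

def rowBlowup : Matrix (Fin (n * k)) (Fin (n * k)) R :=
  Matrix.of fun i j => X i.divNat j

lemma det_colorMask_rowBlowup_eq_zero {κ : Fin (n * k) → Fin k} {r : Fin n} {u u' : Fin k}
    (hne : u ≠ u') (hκ : κ (finProdFinEquiv (r, u)) = κ (finProdFinEquiv (r, u'))) :
    (Matrix.colorMask κ (rowBlowup X)).det = 0 := by
  refine Matrix.det_zero_of_row_eq (i := finProdFinEquiv (r, u)) (j := finProdFinEquiv (r, u'))
    (fun h => hne ?_) (funext fun j => ?_)
  · simpa using congrArg Fin.modNat h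
  · simp [Matrix.colorMask, rowBlowup, hκ]

/-- After regrouping rows and columns by colour, the masked matrix is block diagonal. -/
lemma det_colorMask_blockColoring (p : Fin n → Perm (Fin k)) :
    (Matrix.colorMask (blockColoring p) (rowBlowup X)).det
      = ∏ c, (Matrix.of fun r r' => X r (finProdFinEquiv (r', (p r').symm c))).det := by
  let e : Fin (n * k) ≃ Fin n × Fin k :=
    finProdFinEquiv.symm.trans (Equiv.prodShear (Equiv.refl _) p)
  have hblock : Matrix.colorMask (blockColoring p) (rowBlowup X)
      = (Matrix.blockDiagonal fun c =>
          Matrix.of fun r r' => X r (finProdFinEquiv (r', (p r').symm c))).submatrix e e := by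
    ext i j
    simp only [Matrix.colorMask, rowBlowup, Matrix.submatrix_apply, Matrix.blockDiagonal_apply,
      Matrix.of_apply]
    change _ = if blockColoring p i = blockColoring p j
      then X i.divNat (finProdFinEquiv (j.divNat, (p j.divNat).symm (blockColoring p i))) else 0
    split_ifs with h
    · rw [h, blockColoring, symm_apply_apply, finProdFinEquiv_divNat_modNat]
    · rfl
  rw [hblock, Matrix.det_submatrix_equiv_self, Matrix.det_blockDiagonal]

lemma natCast_pow_mul_wrdet [Algebra ℚ R] (hk : k ≠ 0) :
    (k : R) ^ (n * k) * wrdet k X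
      = ∑ p : Fin n → Perm (Fin k),
          ∏ c, (Matrix.of fun r r' => X r (finProdFinEquiv (r', (p r').symm c))).det := by
  rw [wrdet, ← rowBlowup, Matrix.natCast_pow_mul_adet hk, eq_comm]
  refine Fintype.sum_of_injective _ blockColoring_injective _ _ (fun κ hκ => ?_)
    fun p => (det_colorMask_blockColoring X p).symm
  obtain ⟨r, hr⟩ : ∃ r, ¬Function.Injective fun u => κ (finProdFinEquiv (r, u)) := by
    by_contra! h
    exact hκ (exists_blockColoring_eq κ h)
  obtain ⟨u, u', hκu, hne⟩ := Function.not_injective_iff.mp hr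
  exact det_colorMask_rowBlowup_eq_zero X hne hκu

end Wreath

lemma sum_val_neg_natCast_fin (m : ℕ) :
    ∑ u : Fin m, (-((u : ℕ) : ZMod m)).val = ∑ u : Fin m, (u : ℕ) := by
  cases m with
  | zero => simp
  | succ n =>
    calc ∑ u : Fin (n + 1), (-((u : ℕ) : ZMod (n + 1))).val
        = ∑ u : Fin (n + 1), ((-u : Fin (n + 1)) : ℕ) :=
          sum_congr rfl fun u _ => congrArg (fun x : Fin (n + 1) => ((-x : Fin (n + 1)) : ℕ))
            (Fin.cast_val_eq_self u)
      _ = ∑ u : Fin (n + 1), (u : ℕ) := Equiv.sum_comp (Equiv.neg (Fin (n + 1))) (fun u => (u : ℕ))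

lemma two_mul_sum_val_fin (m : ℕ) : 2 * ∑ u : Fin m, (u : ℕ) = m * (m - 1) := by
  rw [Fin.sum_univ_eq_sum_range (fun i => i) m, mul_comm, Finset.sum_range_id_mul_two]

section Dihedral

open DihedralGroup

variable {m : ℕ}

lemma dihedralOrd_finProdFinEquiv_zero (u : Fin m) :
    dihedralOrd m (finProdFinEquiv (0, u)) = r (u : ℕ) := by
  simp [dihedralOrd, finProdFinEquiv]

lemma dihedralOrd_finProdFinEquiv_one (u : Fin m) :
    dihedralOrd m (finProdFinEquiv (1, u)) = sr (u : ℕ) := by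
  simp [dihedralOrd, finProdFinEquiv]

lemma det_dihedralSpec_block (p : Fin 2 → Perm (Fin m)) (c : Fin m) :
    (Matrix.of fun i j : Fin 2 => dihedralSpec m
        (![1, sr 0] i * (dihedralOrd m (finProdFinEquiv (j, (p j).symm c)))⁻¹)).det
      = X ^ ((-(((p 0).symm c : ℕ) : ZMod m)).val + (p 1).symm c) * (1 - X ^ (2 * m)) := by
  rw [Matrix.det_fin_two]
  simp only [Matrix.of_apply, Matrix.cons_val_zero, Matrix.cons_val_one,
    dihedralOrd_finProdFinEquiv_zero, dihedralOrd_finProdFinEquiv_one, inv_r, inv_sr, one_mul,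
    sr_mul_r, sr_mul_sr, zero_add, sub_zero, dihedralSpec, ZMod.val_natCast_of_lt (Fin.is_lt _)]
  ring

lemma prod_det_dihedralSpec_block (p : Fin 2 → Perm (Fin m)) :
    ∏ c, (Matrix.of fun i j : Fin 2 => dihedralSpec m
        (![1, sr 0] i * (dihedralOrd m (finProdFinEquiv (j, (p j).symm c)))⁻¹)).det
      = X ^ (m * (m - 1)) * (1 - X ^ (2 * m)) ^ m := by
  have hexp : ∑ c, ((-(((p 0).symm c : ℕ) : ZMod m)).val + (p 1).symm c) = m * (m - 1) := by
    rw [sum_add_distrib, Equiv.sum_comp (p 0).symm fun u => (-((u : ℕ) : ZMod m)).val,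
      Equiv.sum_comp (p 1).symm fun u => (u : ℕ), sum_val_neg_natCast_fin, ← two_mul,
      two_mul_sum_val_fin]
  simp only [det_dihedralSpec_block, prod_mul_distrib, prod_pow_eq_pow_sum, hexp, prod_const,
    card_univ, Fintype.card_fin]

end Dihedral

/-- Θ(D_m, ⟨τ⟩) with the standard ordering and principal specialization:
wrdet_m(f(h_i g_j⁻¹)) = (m!/m^m)² · q^{m(m−1)} · (1 − q^{2m})^m,
where H = ⟨τ⟩ = {e, τ} with rows ordered (e, τ). -/
theorem wrdet_dihedral_reflection (m : ℕ) (hm : 0 < m) :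
    wrdet m (Matrix.of fun (i : Fin 2) (j : Fin (2 * m)) =>
        dihedralSpec m ((![1, DihedralGroup.sr 0] i) * (dihedralOrd m j)⁻¹))
      = Polynomial.C (((m.factorial : ℂ) / (m : ℂ) ^ m) ^ 2)
        * Polynomial.X ^ (m * (m - 1)) * (1 - Polynomial.X ^ (2 * m)) ^ m := by
  have hm0 : (m : ℂ) ≠ 0 := Nat.cast_ne_zero.mpr hm.ne'
  have hcoeff : C (((m.factorial : ℂ) / (m : ℂ) ^ m) ^ 2) * (m : ℂ[X]) ^ (2 * m)
      = (m.factorial ^ 2 : ℕ) := by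
    rw [← C_eq_natCast, ← map_natCast C, ← map_pow, ← map_mul, div_pow, ← pow_mul,
      mul_comm m 2, div_mul_cancel₀ _ (pow_ne_zero _ hm0)]
    push_cast
    rfl
  apply mul_left_cancel₀ (pow_ne_zero (2 * m) (Nat.cast_ne_zero.mpr hm.ne' : (m : ℂ[X]) ≠ 0))
  rw [natCast_pow_mul_wrdet _ hm.ne']
  simp only [Matrix.of_apply, prod_det_dihedralSpec_block, sum_const, card_univ,
    Fintype.card_pi, Fintype.card_perm, Fintype.card_fin, prod_const, nsmul_eq_mul]
  rw [← hcoeff]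
  ring
end
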